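/- Let r > 0 and for each m ∈ ℕ let ξ_1, …, ξ_m be i.i.d. random points uniformly distributed in the closed ball B_r of radius r in ℝ³. Let V_m := max over permutations σ of {1,…,m} of Σ_{j=1}^m |ξ_j − ξ_{σ(j)}|. Then for every t ∈ ℝ, liminf_{m→∞} P( V_m / r > (36/35) m + (2√87/35) t √m ) ≥ 1 − Φ(t), where Φ(t) = (2π)^{−1/2} ∫_{−∞}^t e^{−s²/2} ds is the standard normal distribution function. -/

import Mathlib

open MeasureTheory ProbabilityTheory Filter Finset Metric

noncomputable section SizeGrowthAux

local notation "E3" => EuclideanSpace ℝ (Fin 3)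

/-- staircase bound: `∑_{k<K} 1_{k+1 ≤ x} ≤ x` for `x ≥ 0`. -/
lemma sg_staircase (K : ℕ) {x : ℝ} (hx : 0 ≤ x) :
    ∑ k ∈ Finset.range K, (if ((k : ℝ) + 1) ≤ x then (1 : ℝ) else 0) ≤ x := by
  induction K with
  | zero => simpa using hx
  | succ K ih =>
      rw [Finset.sum_range_succ]
      by_cases h : ((K : ℝ) + 1) ≤ x
      · have : ∀ k ∈ Finset.range K, (if ((k : ℝ) + 1) ≤ x then (1 : ℝ) else 0) = 1 := by
          intro k hk
          have hk' : (k : ℝ) + 1 ≤ (K : ℝ) + 1 := by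
            have := Finset.mem_range.1 hk
            have : (k : ℝ) ≤ (K : ℝ) := by exact_mod_cast this.le
            linarith
          rw [if_pos (hk'.trans h)]
        rw [Finset.sum_congr rfl this, if_pos h]
        simpa using h
      · rw [if_neg h, add_zero]; exact ih

/-- the octant (sign pattern) of a point of `ℝ³`. -/
def sgCell (x : E3) : Fin 3 → Bool := fun i => decide (0 ≤ x i)

/-- flip a sign pattern. -/
def sgNeg (s : Fin 3 → Bool) : Fin 3 → Bool := fun i => !(s i)

lemma sgNeg_sgNeg (s : Fin 3 → Bool) : sgNeg (sgNeg s) = s :=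
  funext fun i => Bool.not_not _

lemma sgNeg_eq_iff {a b : Fin 3 → Bool} : b = sgNeg a ↔ a = sgNeg b := by
  constructor <;> rintro rfl <;> rw [sgNeg_sgNeg]

lemma sgNeg_ne (s : Fin 3 → Bool) : sgNeg s ≠ s := by
  intro h
  have := congrFun h 0
  simp [sgNeg] at this

lemma sg_inner_nonpos {x y : E3} (h : sgCell y = sgNeg (sgCell x)) :
    (inner ℝ x y) ≤ 0 := by
  rw [PiLp.inner_apply]
  apply Finset.sum_nonpos
  intro i _
  have hi : (0 ≤ y i) ↔ ¬ (0 ≤ x i) := by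
    have := congrFun h i
    simp only [sgCell, sgNeg, ← decide_not] at this
    exact decide_eq_decide.mp this
  simp only [RCLike.inner_apply, conj_trivial]
  by_cases hx : 0 ≤ x i
  · have hy' : y i ≤ 0 := le_of_not_ge (fun h0 => (hi.1 h0) hx)
    exact mul_nonpos_of_nonpos_of_nonneg hy' hx
  · have hy' : 0 ≤ y i := hi.2 hx
    exact mul_nonpos_of_nonneg_of_nonpos hy' (le_of_not_ge hx)

lemma sg_dist_lower {x y : E3} (h : sgCell y = sgNeg (sgCell x)) :
    ‖x‖ + ‖y‖ ≤ Real.sqrt 2 * dist x y := by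
  have h2 : Real.sqrt 2 * Real.sqrt 2 = 2 := Real.mul_self_sqrt (by norm_num)
  have hinner := sg_inner_nonpos h
  have hsq : ‖x - y‖ ^ 2 = ‖x‖ ^ 2 - 2 * (inner ℝ x y) + ‖y‖ ^ 2 := norm_sub_sq_real x y
  have key : (‖x‖ + ‖y‖) ^ 2 ≤ (Real.sqrt 2 * ‖x - y‖) ^ 2 := by
    have expand : (Real.sqrt 2 * ‖x - y‖) ^ 2 = 2 * ‖x - y‖ ^ 2 := by
      rw [mul_pow]; rw [sq, h2]
    rw [expand, hsq]
    nlinarith [sq_nonneg (‖x‖ - ‖y‖)]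
  have h1 : 0 ≤ ‖x‖ + ‖y‖ := by positivity
  have h3 : 0 ≤ Real.sqrt 2 * ‖x - y‖ := by positivity
  rw [dist_eq_norm]
  nlinarith [key]

/-- **Deterministic key lemma.** For points `y₁,…,y_m` of norm at most `r` in `ℝ³`, the size
(maximal permutation sum of distances) is at least
`√2 (∑ ‖y_j‖ - r ∑_s |#cell s - #cell (-s)|)`. -/
theorem sg_det_lower (m : ℕ) (y : Fin m → E3) (r : ℝ) (hr : 0 ≤ r)
    (hy : ∀ j, ‖y j‖ ≤ r) :
    Real.sqrt 2 * ((∑ j, ‖y j‖) -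
        r * ∑ s : Fin 3 → Bool,
          |((Finset.univ.filter fun j => sgCell (y j) = s).card : ℝ) -
            ((Finset.univ.filter fun j => sgCell (y j) = sgNeg s).card : ℝ)|)
      ≤ ⨆ σ : Equiv.Perm (Fin m), ∑ j, dist (y j) (y (σ j)) := by
  classical
  set u : Fin m → (Fin 3 → Bool) := fun j => sgCell (y j) with hu
  set c : (Fin 3 → Bool) → ℝ := fun s => ((Finset.univ.filter fun j => u j = s).card : ℝ) with hcdef
  have hc0 : ∀ s, 0 ≤ c s := fun s => Nat.cast_nonneg _
  have hcu : ∀ i, 1 ≤ c (u i) := by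
    intro i
    have : i ∈ Finset.univ.filter fun j => u j = u i := by simp
    have hpos : 0 < (Finset.univ.filter fun j => u j = u i).card := Finset.card_pos.2 ⟨i, this⟩
    have h1 : (1 : ℕ) ≤ (Finset.univ.filter fun j => u j = u i).card := hpos
    simp only [hcdef]
    exact_mod_cast h1
  set ρ : Fin m → ℝ := fun i => min (c (u i)) (c (sgNeg (u i))) / c (u i) with hρdef
  set tt : (Fin 3 → Bool) → ℝ := fun s => min (c s) (c (sgNeg s)) / (c s * c (sgNeg s)) with httdef
  have htt_symm : ∀ s, tt (sgNeg s) = tt s := by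
    intro s; simp only [httdef, sgNeg_sgNeg]; rw [min_comm, mul_comm]
  have htt0 : ∀ s, 0 ≤ tt s := by
    intro s
    apply div_nonneg (le_min (hc0 _) (hc0 _)) (mul_nonneg (hc0 _) (hc0 _))
  have hρ0 : ∀ i, 0 ≤ ρ i := by
    intro i
    apply div_nonneg (le_min (hc0 _) (hc0 _)) (hc0 _)
  have hρ1 : ∀ i, ρ i ≤ 1 := by
    intro i
    rw [hρdef]
    apply div_le_one_of_le₀ (min_le_left _ _) (hc0 _)
  have hkey : ∀ i, c (sgNeg (u i)) * tt (u i) = ρ i := by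
    intro i
    by_cases hb : c (sgNeg (u i)) = 0
    · have hmin : min (c (u i)) (c (sgNeg (u i))) = 0 := by
        rw [hb]; exact min_eq_right (hc0 _)
      simp [httdef, hρdef, hb, hmin, min_eq_right (hc0 (u i))]
    · have ha : c (u i) ≠ 0 := by
        have := hcu i; intro h; rw [h] at this; linarith
      simp only [httdef, hρdef]
      field_simp
  set D : Matrix (Fin m) (Fin m) ℝ := fun i j =>
    (if u j = sgNeg (u i) then tt (u i) else 0) + (if i = j then 1 - ρ i else 0) with hDdef
  have hcross_count : ∀ (s : Fin 3 → Bool) (a : ℝ),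
      (∑ j, if u j = s then a else 0) = c s * a := by
    intro s a
    rw [← Finset.sum_filter, Finset.sum_const, hcdef]
    simp [nsmul_eq_mul]
  have hrow : ∀ i, ∑ j, D i j = 1 := by
    intro i
    simp only [hDdef]
    rw [Finset.sum_add_distrib, hcross_count (sgNeg (u i)) (tt (u i)), hkey i,
      Finset.sum_ite_eq]
    simp
  have hflip : ∀ i j, (u j = sgNeg (u i)) ↔ (u i = sgNeg (u j)) := fun i j => sgNeg_eq_iff
  have hcol_cross : ∀ j, (∑ i, if u j = sgNeg (u i) then tt (u i) else 0) = ρ j := by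
    intro j
    have : ∀ i, (if u j = sgNeg (u i) then tt (u i) else 0)
        = (if u i = sgNeg (u j) then tt (u j) else 0) := by
      intro i
      by_cases h : u j = sgNeg (u i)
      · have h' : u i = sgNeg (u j) := (hflip i j).1 h
        rw [if_pos h, if_pos h', h', htt_symm]
      · have h' : ¬ (u i = sgNeg (u j)) := fun hh => h ((hflip i j).2 hh)
        rw [if_neg h, if_neg h']
    rw [Finset.sum_congr rfl fun i _ => this i, hcross_count (sgNeg (u j)) (tt (u j)), hkey j]
  have hcol : ∀ j, ∑ i, D i j = 1 := by
    intro j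
    simp only [hDdef]
    rw [Finset.sum_add_distrib, hcol_cross j]
    have : (∑ i, if i = j then 1 - ρ i else 0) = 1 - ρ j := by
      rw [Finset.sum_ite_eq']; simp
    rw [this]; ring
  have hD0 : ∀ i j, 0 ≤ D i j := by
    intro i j
    apply add_nonneg
    · split
      · exact htt0 _
      · exact le_refl 0
    · split
      · linarith [hρ1 i]
      · exact le_refl 0
  have hDS : D ∈ doublyStochastic ℝ (Fin m) :=
    mem_doublyStochastic_iff_sum.2 ⟨hD0, hrow, hcol⟩
  obtain ⟨w, hw0, hw1, hwD⟩ := exists_eq_sum_perm_of_mem_doublyStochastic hDS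
  set S := ⨆ σ : Equiv.Perm (Fin m), ∑ j, dist (y j) (y (σ j)) with hSdef
  have hle : ∀ σ : Equiv.Perm (Fin m), (∑ j, dist (y j) (y (σ j))) ≤ S :=
    fun σ => le_ciSup (f := fun σ : Equiv.Perm (Fin m) => ∑ j, dist (y j) (y (σ j)))
      (Set.Finite.bddAbove (Set.finite_range _)) σ
  have hD_entry : ∀ i j, D i j
      = ∑ σ : Equiv.Perm (Fin m), w σ * (if j = σ i then 1 else 0) := by
    intro i j
    conv_lhs => rw [← hwD]
    rw [Matrix.sum_apply]
    refine Finset.sum_congr rfl fun σ _ => ?_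
    rw [Matrix.smul_apply]
    simp [Equiv.Perm.permMatrix, PEquiv.toMatrix_apply, Equiv.toPEquiv_apply,
      Option.mem_def, eq_comm, smul_eq_mul]
  have hstep : ∀ i, (∑ j, D i j * dist (y i) (y j))
      = ∑ σ : Equiv.Perm (Fin m), w σ * dist (y i) (y (σ i)) := by
    intro i
    calc ∑ j, D i j * dist (y i) (y j)
        = ∑ j, ∑ σ : Equiv.Perm (Fin m), (if j = σ i then w σ * dist (y i) (y j) else 0) := by
          refine Finset.sum_congr rfl fun j _ => ?_
          rw [hD_entry, Finset.sum_mul]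
          refine Finset.sum_congr rfl fun σ _ => ?_
          by_cases h : j = σ i <;> simp [h]
      _ = ∑ σ : Equiv.Perm (Fin m), ∑ j, (if j = σ i then w σ * dist (y i) (y j) else 0) :=
          Finset.sum_comm
      _ = ∑ σ : Equiv.Perm (Fin m), w σ * dist (y i) (y (σ i)) := by
          refine Finset.sum_congr rfl fun σ _ => ?_
          rw [Finset.sum_ite_eq' Finset.univ (σ i) (fun j => w σ * dist (y i) (y j))]
          simp
  have hCD_le : (∑ i, ∑ j, D i j * dist (y i) (y j)) ≤ S := by
    calc ∑ i, ∑ j, D i j * dist (y i) (y j)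
        = ∑ i, ∑ σ : Equiv.Perm (Fin m), w σ * dist (y i) (y (σ i)) :=
          Finset.sum_congr rfl fun i _ => hstep i
      _ = ∑ σ : Equiv.Perm (Fin m), ∑ i, w σ * dist (y i) (y (σ i)) := Finset.sum_comm
      _ = ∑ σ : Equiv.Perm (Fin m), w σ * ∑ i, dist (y i) (y (σ i)) := by
          refine Finset.sum_congr rfl fun σ _ => ?_
          rw [Finset.mul_sum]
      _ ≤ ∑ σ : Equiv.Perm (Fin m), w σ * S :=
          Finset.sum_le_sum fun σ _ => mul_le_mul_of_nonneg_left (hle σ) (hw0 σ)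
      _ = S := by rw [← Finset.sum_mul, hw1, one_mul]
  -- now the lower bound for the Frobenius pairing
  have hsqrt2_pos : (0:ℝ) < Real.sqrt 2 := Real.sqrt_pos.2 (by norm_num)
  have hDd : ∀ i j, D i j * dist (y i) (y j)
      = (if u j = sgNeg (u i) then tt (u i) * dist (y i) (y j) else 0) := by
    intro i j
    by_cases hij : i = j
    · subst hij
      have : ¬ (u i = sgNeg (u i)) := fun h => sgNeg_ne (u i) h.symm
      simp [hDdef, this, dist_self]
    · simp only [hDdef, if_neg (fun h => hij h), add_zero, ite_mul, zero_mul]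
  have hcross_dist : ∀ i j, (if u j = sgNeg (u i) then tt (u i) * ((‖y i‖ + ‖y j‖) / Real.sqrt 2) else 0)
      ≤ (if u j = sgNeg (u i) then tt (u i) * dist (y i) (y j) else 0) := by
    intro i j
    by_cases h : u j = sgNeg (u i)
    · rw [if_pos h, if_pos h]
      refine mul_le_mul_of_nonneg_left ?_ (htt0 _)
      rw [div_le_iff₀ hsqrt2_pos, mul_comm]
      exact sg_dist_lower h
    · rw [if_neg h, if_neg h]
  have eqA : ∀ i, (∑ j, if u j = sgNeg (u i) then tt (u i) * (‖y i‖ / Real.sqrt 2) else 0)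
      = ρ i * (‖y i‖ / Real.sqrt 2) := by
    intro i
    rw [hcross_count (sgNeg (u i)) (tt (u i) * (‖y i‖ / Real.sqrt 2)), ← mul_assoc, hkey i]
  have eqB : ∀ j, (∑ i, if u j = sgNeg (u i) then tt (u i) * (‖y j‖ / Real.sqrt 2) else 0)
      = ρ j * (‖y j‖ / Real.sqrt 2) := by
    intro j
    have congr1 : ∀ i, (if u j = sgNeg (u i) then tt (u i) * (‖y j‖ / Real.sqrt 2) else 0)
        = (if u i = sgNeg (u j) then tt (u j) * (‖y j‖ / Real.sqrt 2) else 0) := by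
      intro i
      by_cases h : u j = sgNeg (u i)
      · have h' : u i = sgNeg (u j) := (hflip i j).1 h
        rw [if_pos h, if_pos h', h', htt_symm]
      · have h' : ¬ (u i = sgNeg (u j)) := fun hh => h ((hflip i j).2 hh)
        rw [if_neg h, if_neg h']
    rw [Finset.sum_congr rfl fun i _ => congr1 i,
      hcross_count (sgNeg (u j)) (tt (u j) * (‖y j‖ / Real.sqrt 2)), ← mul_assoc, hkey j]
  have hlow : Real.sqrt 2 * (∑ i, ρ i * ‖y i‖) ≤ ∑ i, ∑ j, D i j * dist (y i) (y j) := by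
    have split : ∀ i j, (if u j = sgNeg (u i) then tt (u i) * ((‖y i‖ + ‖y j‖) / Real.sqrt 2) else 0)
        = (if u j = sgNeg (u i) then tt (u i) * (‖y i‖ / Real.sqrt 2) else 0)
          + (if u j = sgNeg (u i) then tt (u i) * (‖y j‖ / Real.sqrt 2) else 0) := by
      intro i j
      by_cases h : u j = sgNeg (u i) <;> simp [h, add_div, mul_add]
    have h2 : Real.sqrt 2 * Real.sqrt 2 = 2 := Real.mul_self_sqrt (by norm_num)
    have hhelp : ∀ a : ℝ, Real.sqrt 2 * a = a / Real.sqrt 2 + a / Real.sqrt 2 := by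
      intro a
      rw [← add_div, eq_div_iff hsqrt2_pos.ne']
      linear_combination a * h2
    have hswap : (∑ i, ∑ j, ((if u j = sgNeg (u i) then tt (u i) * (‖y i‖ / Real.sqrt 2) else 0)
            + (if u j = sgNeg (u i) then tt (u i) * (‖y j‖ / Real.sqrt 2) else 0)))
        = (∑ i, ∑ j, (if u j = sgNeg (u i) then tt (u i) * (‖y i‖ / Real.sqrt 2) else 0))
            + ∑ j, ∑ i, (if u j = sgNeg (u i) then tt (u i) * (‖y j‖ / Real.sqrt 2) else 0) := by
      simp only [Finset.sum_add_distrib]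
      congr 1
      exact Finset.sum_comm
    calc Real.sqrt 2 * (∑ i, ρ i * ‖y i‖)
        = ∑ i, (ρ i * (‖y i‖ / Real.sqrt 2) + ρ i * (‖y i‖ / Real.sqrt 2)) := by
          rw [Finset.mul_sum]
          refine Finset.sum_congr rfl fun i _ => ?_
          rw [hhelp (ρ i * ‖y i‖)]
          simp only [mul_div_assoc]
      _ = (∑ i, ρ i * (‖y i‖ / Real.sqrt 2)) + ∑ j, ρ j * (‖y j‖ / Real.sqrt 2) :=
          Finset.sum_add_distrib
      _ = (∑ i, ∑ j, if u j = sgNeg (u i) then tt (u i) * (‖y i‖ / Real.sqrt 2) else 0)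
            + ∑ j, ∑ i, (if u j = sgNeg (u i) then tt (u i) * (‖y j‖ / Real.sqrt 2) else 0) := by
          congr 1
          · exact Finset.sum_congr rfl fun i _ => (eqA i).symm
          · exact Finset.sum_congr rfl fun j _ => (eqB j).symm
      _ = ∑ i, ∑ j, ((if u j = sgNeg (u i) then tt (u i) * (‖y i‖ / Real.sqrt 2) else 0)
            + (if u j = sgNeg (u i) then tt (u i) * (‖y j‖ / Real.sqrt 2) else 0)) := hswap.symm
      _ = ∑ i, ∑ j, (if u j = sgNeg (u i) then tt (u i) * ((‖y i‖ + ‖y j‖) / Real.sqrt 2) else 0) := by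
          refine Finset.sum_congr rfl fun i _ => Finset.sum_congr rfl fun j _ => (split i j).symm
      _ ≤ ∑ i, ∑ j, (if u j = sgNeg (u i) then tt (u i) * dist (y i) (y j) else 0) :=
          Finset.sum_le_sum fun i _ => Finset.sum_le_sum fun j _ => hcross_dist i j
      _ = ∑ i, ∑ j, D i j * dist (y i) (y j) := by
          refine Finset.sum_congr rfl fun i _ => Finset.sum_congr rfl fun j _ => (hDd i j).symm
  -- fiber counting
  have hfiber : (∑ i, (1 - ρ i)) = ∑ s : Fin 3 → Bool, (c s - min (c s) (c (sgNeg s))) := by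
    have maps : ∀ i ∈ (Finset.univ : Finset (Fin m)), u i ∈ (Finset.univ : Finset (Fin 3 → Bool)) :=
      fun i _ => Finset.mem_univ _
    rw [← Finset.sum_fiberwise_of_maps_to maps (fun i => 1 - ρ i)]
    refine Finset.sum_congr rfl fun s _ => ?_
    have hval : ∀ i ∈ Finset.univ.filter (fun i => u i = s),
        1 - ρ i = 1 - min (c s) (c (sgNeg s)) / c s := by
      intro i hi
      have hus : u i = s := (Finset.mem_filter.1 hi).2
      simp only [hρdef]
      rw [hus]
    rw [Finset.sum_congr rfl hval, Finset.sum_const, nsmul_eq_mul]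
    by_cases hcs : c s = 0
    · have hcard : ((Finset.univ.filter fun i => u i = s).card : ℝ) = 0 := hcs
      have hmin : min (c s) (c (sgNeg s)) = 0 := by
        rw [hcs]; exact min_eq_left (hc0 _)
      rw [hcard, hmin, hcs]; ring
    · have hcard : ((Finset.univ.filter fun i => u i = s).card : ℝ) = c s := rfl
      rw [hcard]
      field_simp
  have habs : (∑ s : Fin 3 → Bool, (c s - min (c s) (c (sgNeg s))))
      ≤ ∑ s : Fin 3 → Bool, |c s - c (sgNeg s)| := by
    refine Finset.sum_le_sum fun s _ => ?_
    rcases le_total (c s) (c (sgNeg s)) with h | h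
    · rw [min_eq_left h]; simp [abs_nonneg]
    · rw [min_eq_right h]
      exact le_abs_self _
  have hsum_rho : (∑ j, ‖y j‖) - r * (∑ s : Fin 3 → Bool, |c s - c (sgNeg s)|)
      ≤ ∑ i, ρ i * ‖y i‖ := by
    have h1 : ∑ i, (1 - ρ i) * ‖y i‖ ≤ ∑ i, (1 - ρ i) * r :=
      Finset.sum_le_sum fun i _ => mul_le_mul_of_nonneg_left (hy i) (by linarith [hρ1 i])
    have h2 : (∑ i, (1 - ρ i) * r) = (∑ i, (1 - ρ i)) * r := by
      rw [Finset.sum_mul]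
    have h3 : (∑ i, (1 - ρ i)) * r ≤ (∑ s : Fin 3 → Bool, |c s - c (sgNeg s)|) * r := by
      apply mul_le_mul_of_nonneg_right _ hr
      rw [hfiber]; exact habs
    have h4 : (∑ i, ρ i * ‖y i‖) = (∑ j, ‖y j‖) - ∑ i, (1 - ρ i) * ‖y i‖ := by
      rw [← Finset.sum_sub_distrib]
      refine Finset.sum_congr rfl fun i _ => by ring
    rw [h4]
    nlinarith [h1, h2, h3]
  calc Real.sqrt 2 * ((∑ j, ‖y j‖) - r * ∑ s : Fin 3 → Bool,
          |((Finset.univ.filter fun j => sgCell (y j) = s).card : ℝ) -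
            ((Finset.univ.filter fun j => sgCell (y j) = sgNeg s).card : ℝ)|)
      ≤ Real.sqrt 2 * (∑ i, ρ i * ‖y i‖) := by
        apply mul_le_mul_of_nonneg_left _ hsqrt2_pos.le
        exact hsum_rho
    _ ≤ ∑ i, ∑ j, D i j * dist (y i) (y j) := hlow
    _ ≤ S := hCD_le



lemma sgO_measurable (s : Fin 3 → Bool) : MeasurableSet {x : E3 | sgCell x = s} := by
  have : {x : E3 | sgCell x = s} = ⋂ i : Fin 3, {x : E3 | decide (0 ≤ x i) = s i} := by
    ext x
    simp only [Set.mem_setOf_eq, Set.mem_iInter, funext_iff, sgCell]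
  rw [this]
  apply MeasurableSet.iInter
  intro i
  have hco : Measurable fun x : E3 => x i := (EuclideanSpace.proj (𝕜 := ℝ) i).continuous.measurable
  by_cases hs : s i
  · have : {x : E3 | decide (0 ≤ x i) = s i} = {x : E3 | 0 ≤ x i} := by
      ext x; simp [hs]
    rw [this]
    exact measurableSet_le measurable_const hco
  · have : {x : E3 | decide (0 ≤ x i) = s i} = {x : E3 | 0 ≤ x i}ᶜ := by
      ext x; simp [Bool.not_eq_true] at hs ⊢; simp [hs]
    rw [this]
    exact (measurableSet_le measurable_const hco).compl

lemma sg_hyperplane_null : volume {x : E3 | ∃ i, x i = 0} = 0 := by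
  have : {x : E3 | ∃ i, x i = 0} = ⋃ i : Fin 3, {x : E3 | x i = 0} := by
    ext x; simp
  rw [this]
  refine measure_iUnion_null fun i => ?_
  set K : Submodule ℝ (EuclideanSpace ℝ (Fin 3)) :=
    LinearMap.ker ((EuclideanSpace.proj (𝕜 := ℝ) i : E3 →L[ℝ] ℝ) : E3 →ₗ[ℝ] ℝ) with hK
  have hset : {x : E3 | x i = 0} = (K : Set E3) := by
    ext x
    simp only [Set.mem_setOf_eq, hK, SetLike.mem_coe, LinearMap.mem_ker,
      ContinuousLinearMap.coe_coe, PiLp.proj_apply]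
  have hne : K ≠ ⊤ := by
    intro h
    have hx : EuclideanSpace.single i (1 : ℝ) ∈ K := h ▸ Submodule.mem_top
    have : (EuclideanSpace.single i (1 : ℝ) : E3) i = 0 := by
      simpa only [hK, LinearMap.mem_ker, ContinuousLinearMap.coe_coe,
        PiLp.proj_apply] using hx
    rw [EuclideanSpace.single_apply] at this
    simp at this
  rw [hset]
  exact Measure.addHaar_submodule volume K hne

lemma sg_cell_symm (r : ℝ) (s : Fin 3 → Bool) :
    volume ({x : E3 | sgCell x = s} ∩ closedBall 0 r)
      = volume ({x : E3 | sgCell x = sgNeg s} ∩ closedBall 0 r) := by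
  set T : Set E3 := {x : E3 | ∃ i, x i = 0} with hT
  have hTnull : volume T = 0 := sg_hyperplane_null
  have hseteq : ({x : E3 | sgCell x = sgNeg s} ∩ closedBall 0 r) \ T
      = ((fun x : E3 => -x) ⁻¹' ({x : E3 | sgCell x = s} ∩ closedBall 0 r)) \ T := by
    ext x
    simp only [Set.mem_diff, Set.mem_inter_iff, Set.mem_preimage, Set.mem_setOf_eq, hT]
    constructor
    · rintro ⟨⟨hcell, hball⟩, hnT⟩
      refine ⟨⟨?_, ?_⟩, hnT⟩
      · funext i
        have hi := congrFun hcell i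
        have hxi : x i ≠ 0 := fun h0 => hnT ⟨i, h0⟩
        simp only [sgCell, sgNeg] at hi ⊢
        rw [PiLp.neg_apply]
        rcases lt_or_gt_of_ne hxi with hlt | hgt
        · have h1 : decide (0 ≤ x i) = false := by simp [not_le.2 hlt]
          rw [h1] at hi
          have h2 : decide (0 ≤ -x i) = true := by simp [le_of_lt (neg_pos.2 hlt)]
          rw [h2]
          simp at hi
          simp [hi]
        · have h1 : decide (0 ≤ x i) = true := by simp [le_of_lt hgt]
          rw [h1] at hi
          have h2 : decide (0 ≤ -x i) = false := by simp [not_le.2 (neg_neg_iff_pos.2 hgt)]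
          rw [h2]
          simp at hi
          simp [hi]
      · rw [mem_closedBall_zero_iff] at hball ⊢
        simpa using hball
    · rintro ⟨⟨hcell, hball⟩, hnT⟩
      refine ⟨⟨?_, ?_⟩, hnT⟩
      · funext i
        have hi := congrFun hcell i
        have hxi : x i ≠ 0 := fun h0 => hnT ⟨i, h0⟩
        simp only [sgCell, sgNeg] at hi ⊢
        rw [PiLp.neg_apply] at hi
        rcases lt_or_gt_of_ne hxi with hlt | hgt
        · have h2 : decide (0 ≤ -x i) = true := by simp [le_of_lt (neg_pos.2 hlt)]
          rw [h2] at hi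
          have h1 : decide (0 ≤ x i) = false := by simp [not_le.2 hlt]
          rw [h1, ← hi]
          simp
        · have h2 : decide (0 ≤ -x i) = false := by simp [not_le.2 (neg_neg_iff_pos.2 hgt)]
          rw [h2] at hi
          have h1 : decide (0 ≤ x i) = true := by simp [le_of_lt hgt]
          rw [h1, ← hi]
          simp
      · rw [mem_closedBall_zero_iff] at hball ⊢
        simpa using hball
  symm
  calc volume ({x : E3 | sgCell x = sgNeg s} ∩ closedBall 0 r)
      = volume (({x : E3 | sgCell x = sgNeg s} ∩ closedBall 0 r) \ T) :=
        (measure_diff_null hTnull).symm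
    _ = volume (((fun x : E3 => -x) ⁻¹' ({x : E3 | sgCell x = s} ∩ closedBall 0 r)) \ T) := by
        rw [hseteq]
    _ = volume ((fun x : E3 => -x) ⁻¹' ({x : E3 | sgCell x = s} ∩ closedBall 0 r)) :=
        measure_diff_null hTnull
    _ = volume ({x : E3 | sgCell x = s} ∩ closedBall 0 r) := by
        exact Measure.measure_preimage_neg volume _

section Nu
open scoped ENNReal

def sgNu (r : ℝ) : Measure (EuclideanSpace ℝ (Fin 3)) :=
  (volume (closedBall (0 : EuclideanSpace ℝ (Fin 3)) r))⁻¹ •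
    volume.restrict (closedBall (0 : EuclideanSpace ℝ (Fin 3)) r)

variable {r : ℝ}

lemma sg_volB_ne_zero (hr : 0 < r) : volume (closedBall (0 : E3) r) ≠ 0 :=
  (Metric.measure_closedBall_pos volume 0 hr).ne'

lemma sg_volB_ne_top : volume (closedBall (0 : E3) r) ≠ ⊤ :=
  measure_closedBall_lt_top.ne

lemma sgNu_prob (hr : 0 < r) : IsProbabilityMeasure (sgNu r) := by
  constructor
  rw [sgNu, Measure.smul_apply, Measure.restrict_apply_univ, smul_eq_mul]
  exact ENNReal.inv_mul_cancel (sg_volB_ne_zero hr) sg_volB_ne_top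

lemma sgNu_ae_le (hr : 0 < r) : ∀ᵐ x ∂(sgNu r), ‖x‖ ≤ r := by
  have h : ∀ᵐ x ∂(volume.restrict (closedBall (0 : E3) r)), x ∈ closedBall (0 : E3) r :=
    ae_restrict_mem measurableSet_closedBall
  have h2 := Measure.ae_smul_measure h (volume (closedBall (0 : E3) r))⁻¹
  rw [← sgNu] at h2
  filter_upwards [h2] with x hx
  exact mem_closedBall_zero_iff.1 hx

lemma sgNu_closedBall (hr : 0 < r) {a : ℝ} (ha0 : 0 ≤ a) (har : a ≤ r) :
    (sgNu r (closedBall 0 a)).toReal = (a / r) ^ 3 := by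
  have hsub : closedBall (0 : E3) a ⊆ closedBall (0 : E3) r :=
    closedBall_subset_closedBall har
  have hfr : Module.finrank ℝ (EuclideanSpace ℝ (Fin 3)) = 3 := finrank_euclideanSpace_fin
  have hva : volume (closedBall (0 : E3) a)
      = ENNReal.ofReal (a ^ 3) * volume (ball (0 : E3) 1) := by
    rw [Measure.addHaar_closedBall volume 0 ha0, hfr]
  have hvr : volume (closedBall (0 : E3) r)
      = ENNReal.ofReal (r ^ 3) * volume (ball (0 : E3) 1) := by
    rw [Measure.addHaar_closedBall volume 0 hr.le, hfr]
  have hnu : sgNu r (closedBall 0 a)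
      = (volume (closedBall (0 : E3) r))⁻¹ * volume (closedBall (0 : E3) a) := by
    rw [sgNu, Measure.smul_apply, Measure.restrict_apply measurableSet_closedBall,
      Set.inter_eq_left.2 hsub, smul_eq_mul]
  have hV1pos : volume (ball (0 : E3) 1) ≠ 0 := (measure_ball_pos volume 0 one_pos).ne'
  have hV1top : volume (ball (0 : E3) 1) ≠ ⊤ := measure_ball_lt_top.ne
  rw [hnu, hva, hvr]
  rw [ENNReal.toReal_mul, ENNReal.toReal_inv, ENNReal.toReal_mul, ENNReal.toReal_mul,
    ENNReal.toReal_ofReal (by positivity), ENNReal.toReal_ofReal (by positivity)]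
  have hv1 : (volume (ball (0 : E3) 1)).toReal ≠ 0 := by
    intro h
    rcases (ENNReal.toReal_eq_zero_iff _).1 h with h | h
    · exact hV1pos h
    · exact hV1top h
  have hr3 : r ^ 3 ≠ 0 := by positivity
  field_simp

lemma sgNu_tail (hr : 0 < r) {a : ℝ} (ha0 : 0 ≤ a) (har : a ≤ r) :
    1 - (a / r) ^ 3 ≤ (sgNu r {x : E3 | a ≤ ‖x‖}).toReal := by
  haveI : IsProbabilityMeasure (sgNu r) := sgNu_prob hr
  have hsub : (closedBall (0 : E3) a)ᶜ ⊆ {x : E3 | a ≤ ‖x‖} := by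
    intro x hx
    simp only [Set.mem_compl_iff, mem_closedBall_zero_iff, not_le] at hx
    exact hx.le
  have h1 : sgNu r ((closedBall (0 : E3) a)ᶜ) ≤ sgNu r {x : E3 | a ≤ ‖x‖} :=
    measure_mono hsub
  have h2 : sgNu r ((closedBall (0 : E3) a)ᶜ) = 1 - sgNu r (closedBall (0 : E3) a) :=
    prob_compl_eq_one_sub measurableSet_closedBall
  have h3 : (sgNu r ((closedBall (0 : E3) a)ᶜ)).toReal
      = 1 - (sgNu r (closedBall 0 a)).toReal := by
    rw [h2, ENNReal.toReal_sub_of_le prob_le_one ENNReal.one_ne_top, ENNReal.toReal_one]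
  calc 1 - (a / r) ^ 3 = (sgNu r ((closedBall (0 : E3) a)ᶜ)).toReal := by
        rw [h3, sgNu_closedBall hr ha0 har]
    _ ≤ (sgNu r {x : E3 | a ≤ ‖x‖}).toReal :=
        ENNReal.toReal_mono (measure_ne_top _ _) h1

lemma sgNu_moment (hr : 0 < r) : 4719 / 6400 * r ≤ ∫ x, ‖x‖ ∂(sgNu r) := by
  haveI : IsProbabilityMeasure (sgNu r) := sgNu_prob hr
  set S : ℕ → Set E3 := fun k => {x : E3 | ((k : ℝ) + 1) * (r / 40) ≤ ‖x‖} with hS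
  have hSmeas : ∀ k, MeasurableSet (S k) :=
    fun k => measurableSet_le measurable_const measurable_norm
  have hInd : ∀ k, Integrable ((S k).indicator fun _ => (1 : ℝ)) (sgNu r) :=
    fun k => (integrable_const 1).indicator (hSmeas k)
  -- pointwise staircase bound
  have hpt : ∀ x : E3,
      (r / 40) * ∑ k ∈ Finset.range 40, (S k).indicator (fun _ => (1 : ℝ)) x ≤ ‖x‖ := by
    intro x
    have hx : (0 : ℝ) ≤ 40 * ‖x‖ / r := by positivity
    have hst := sg_staircase 40 hx
    have hcond : ∀ k : ℕ, (((k : ℝ) + 1) ≤ 40 * ‖x‖ / r) ↔ (((k : ℝ) + 1) * (r / 40) ≤ ‖x‖) := by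
      intro k
      rw [le_div_iff₀ hr]
      constructor <;> intro h <;> nlinarith [h, hr]
    have heq : ∀ k ∈ Finset.range 40,
        (S k).indicator (fun _ => (1 : ℝ)) x = if ((k : ℝ) + 1) ≤ 40 * ‖x‖ / r then (1:ℝ) else 0 := by
      intro k _
      rw [Set.indicator_apply]
      by_cases h : x ∈ S k
      · rw [if_pos h, if_pos ((hcond k).2 h)]
      · rw [if_neg h, if_neg (fun hh => h ((hcond k).1 hh))]
    rw [Finset.sum_congr rfl heq]
    calc (r / 40) * ∑ k ∈ Finset.range 40, (if ((k : ℝ) + 1) ≤ 40 * ‖x‖ / r then (1:ℝ) else 0)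
        ≤ (r / 40) * (40 * ‖x‖ / r) := by
          apply mul_le_mul_of_nonneg_left hst (by positivity)
      _ = ‖x‖ := by field_simp
  -- integrate
  have hnorm_int : Integrable (fun x : E3 => ‖x‖) (sgNu r) := by
    refine (integrable_const r).mono' continuous_norm.aestronglyMeasurable ?_
    filter_upwards [sgNu_ae_le hr] with x hx
    rwa [Real.norm_eq_abs, abs_of_nonneg (norm_nonneg x)]
  have hsum_int : Integrable
      (fun x : E3 => (r / 40) * ∑ k ∈ Finset.range 40, (S k).indicator (fun _ => (1 : ℝ)) x)
      (sgNu r) := by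
    apply Integrable.const_mul
    exact integrable_finset_sum _ (fun k _ => hInd k)
  have hint1 : (∫ x, (r / 40) * ∑ k ∈ Finset.range 40, (S k).indicator (fun _ => (1 : ℝ)) x ∂(sgNu r))
      ≤ ∫ x, ‖x‖ ∂(sgNu r) := integral_mono hsum_int hnorm_int hpt
  have hint2 : (∫ x, (r / 40) * ∑ k ∈ Finset.range 40, (S k).indicator (fun _ => (1 : ℝ)) x ∂(sgNu r))
      = (r / 40) * ∑ k ∈ Finset.range 40, ((sgNu r) (S k)).toReal := by
    rw [integral_const_mul, integral_finset_sum _ (fun k _ => hInd k)]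
    congr 1
    refine Finset.sum_congr rfl fun k _ => ?_
    rw [integral_indicator_const (1 : ℝ) (hSmeas k)]
    simp [measureReal_def]
  have htail : ∀ k ∈ Finset.range 40,
      (1 : ℝ) - (((k : ℝ) + 1) / 40) ^ 3 ≤ ((sgNu r) (S k)).toReal := by
    intro k hk
    have hk40 : (k : ℝ) + 1 ≤ 40 := by
      have := Finset.mem_range.1 hk
      have : (k : ℝ) ≤ 39 := by exact_mod_cast Nat.lt_succ_iff.1 (by simpa using this)
      linarith
    have ha0 : (0:ℝ) ≤ ((k : ℝ) + 1) * (r / 40) := by positivity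
    have har : ((k : ℝ) + 1) * (r / 40) ≤ r := by
      rw [mul_div_assoc']
      rw [div_le_iff₀ (by norm_num : (0:ℝ) < 40)]
      nlinarith [hr]
    have := sgNu_tail hr ha0 har
    have harg : (((k : ℝ) + 1) * (r / 40)) / r = ((k : ℝ) + 1) / 40 := by
      field_simp
    rwa [harg] at this
  have hnum : ∑ k ∈ Finset.range 40, ((1 : ℝ) - (((k : ℝ) + 1) / 40) ^ 3) = 4719 / 160 := by
    norm_num [Finset.sum_range_succ]
  calc (4719 : ℝ) / 6400 * r = (r / 40) * (4719 / 160) := by ring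
    _ ≤ (r / 40) * ∑ k ∈ Finset.range 40, ((sgNu r) (S k)).toReal := by
        apply mul_le_mul_of_nonneg_left _ (by positivity)
        rw [← hnum]
        exact Finset.sum_le_sum htail
    _ = _ := hint2.symm
    _ ≤ ∫ x, ‖x‖ ∂(sgNu r) := hint1

lemma sgNu_cell_symm (hr : 0 < r) (s : Fin 3 → Bool) :
    sgNu r {x : E3 | sgCell x = s} = sgNu r {x : E3 | sgCell x = sgNeg s} := by
  rw [sgNu, Measure.smul_apply, Measure.smul_apply,
    Measure.restrict_apply (sgO_measurable s), Measure.restrict_apply (sgO_measurable (sgNeg s)),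
    sg_cell_symm r s]

end Nu


end SizeGrowthAux

set_option maxHeartbeats 1000000 in
open scoped ENNReal in
/-- For i.i.d. points uniformly distributed in the closed ball of
radius `r` in `ℝ³`, with `V_m` the size of the sample (maximum over permutations `σ`
of `∑_j |ξ_j - ξ_{σ(j)}|`), one has
`liminf_m P( V_m / r > (36/35) m + (2√87/35) t √m ) ≥ 1 - Φ(t)` for every `t`. -/
theorem size_growth_liminf_estimate
    (r : ℝ) (hr : 0 < r)
    {Ω : Type*} [MeasurableSpace Ω] (P : Measure Ω) [IsProbabilityMeasure P]
    (ξ : (m : ℕ) → Fin m → Ω → EuclideanSpace ℝ (Fin 3))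
    (hmeas : ∀ m i, Measurable (ξ m i))
    (hindep : ∀ m, iIndepFun (ξ m) P)
    (hunif : ∀ m i, Measure.map (ξ m i) P =
      (volume (Metric.closedBall (0 : EuclideanSpace ℝ (Fin 3)) r))⁻¹ •
        volume.restrict (Metric.closedBall (0 : EuclideanSpace ℝ (Fin 3)) r))
    (V : (m : ℕ) → Ω → ℝ)
    (hV : ∀ m ω, V m ω = ⨆ σ : Equiv.Perm (Fin m), ∑ j, dist (ξ m j ω) (ξ m (σ j) ω))
    (Φ : ℝ → ℝ)
    (hΦ : ∀ t, Φ t = (Real.sqrt (2 * Real.pi))⁻¹ * ∫ s in Set.Iic t, Real.exp (-s ^ 2 / 2)) :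
    ∀ t : ℝ,
      1 - Φ t ≤
        liminf
          (fun m : ℕ =>
            (P {ω | 36 / 35 * (m : ℝ) + 2 * Real.sqrt 87 / 35 * t * Real.sqrt m < V m ω / r}).toReal)
          atTop := by
  intro t
  classical
  have hΦ0 : 0 ≤ Φ t := by
    rw [hΦ]
    apply mul_nonneg (inv_nonneg.2 (Real.sqrt_nonneg _))
    exact integral_nonneg fun s => le_of_lt (Real.exp_pos _)
  haveI hνP : IsProbabilityMeasure (sgNu r) := sgNu_prob hr
  set μ₁ := ∫ x, ‖x‖ ∂(sgNu r) with hμ₁def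
  have hμ₁ : 4719 / 6400 * r ≤ μ₁ := sgNu_moment hr
  set M : ℕ := max 1 ⌈(200 * (|t| + 1)) ^ 2⌉₊ with hMdef
  set f : ℕ → ℝ := fun m =>
    (P {ω | 36 / 35 * (m : ℝ) + 2 * Real.sqrt 87 / 35 * t * Real.sqrt m < V m ω / r}).toReal
    with hfdef
  have key : ∀ m : ℕ, M ≤ m → (1 : ℝ) - 900000000 / m ≤ f m := by
    intro m hm
    have hm1 : 1 ≤ m := le_trans (le_max_left _ _) hm
    have hmR : (1 : ℝ) ≤ (m : ℝ) := by exact_mod_cast hm1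
    have hmpos : (0 : ℝ) < m := by linarith
    -- the map law
    have hmap : ∀ j : Fin m, Measure.map (ξ m j) P = sgNu r := by
      intro j; rw [hunif m j, sgNu]
    -- random variables
    set Z : Fin m → Ω → ℝ := fun j ω => ‖ξ m j ω‖ with hZdef
    set g : (Fin 3 → Bool) → EuclideanSpace ℝ (Fin 3) → ℝ := fun s x =>
      ({x : EuclideanSpace ℝ (Fin 3) | sgCell x = s}.indicator (fun _ => (1 : ℝ)) x)
        - ({x : EuclideanSpace ℝ (Fin 3) | sgCell x = sgNeg s}.indicator (fun _ => (1 : ℝ)) x)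
      with hgdef
    set Y : (Fin 3 → Bool) → Fin m → Ω → ℝ := fun s j ω => g s (ξ m j ω) with hYdef
    have hgmeas : ∀ s, Measurable (g s) := fun s =>
      (measurable_const.indicator (sgO_measurable s)).sub
        (measurable_const.indicator (sgO_measurable (sgNeg s)))
    have hgbound : ∀ s x, |g s x| ≤ 1 := by
      intro s x
      simp only [hgdef, Set.indicator_apply]
      split_ifs <;> norm_num
    have hgint : ∀ s, ∫ x, g s x ∂(sgNu r) = 0 := by
      intro s
      simp only [hgdef]
      rw [integral_sub ((integrable_const (1:ℝ)).indicator (sgO_measurable s))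
        ((integrable_const (1:ℝ)).indicator (sgO_measurable (sgNeg s))),
        integral_indicator_const (1:ℝ) (sgO_measurable s),
        integral_indicator_const (1:ℝ) (sgO_measurable (sgNeg s)),
        measureReal_def, measureReal_def, sgNu_cell_symm hr s]
      simp
    -- measurability and boundedness
    have hZmeas : ∀ j, Measurable (Z j) := fun j => (hmeas m j).norm
    have haeB : ∀ j, ∀ᵐ ω ∂P, ξ m j ω ∈ closedBall (0 : EuclideanSpace ℝ (Fin 3)) r := by
      intro j
      have h0 : sgNu r ((closedBall (0 : EuclideanSpace ℝ (Fin 3)) r)ᶜ) = 0 := by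
        rw [sgNu, Measure.smul_apply, Measure.restrict_apply measurableSet_closedBall.compl,
          Set.compl_inter_self]
        simp
      have h1 : P ((ξ m j) ⁻¹' (closedBall (0 : EuclideanSpace ℝ (Fin 3)) r)ᶜ) = 0 := by
        rw [← Measure.map_apply (hmeas m j) measurableSet_closedBall.compl, hmap j, h0]
      rw [ae_iff]
      convert h1 using 2
      rfl
    have hZbound : ∀ j, ∀ᵐ ω ∂P, |Z j ω| ≤ r := by
      intro j
      filter_upwards [haeB j] with ω hω
      rw [hZdef, abs_of_nonneg (norm_nonneg _)]
      exact mem_closedBall_zero_iff.1 hω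
    have hZL2 : ∀ j, MemLp (Z j) 2 P := by
      intro j
      refine MemLp.of_bound (hZmeas j).aestronglyMeasurable r ?_
      filter_upwards [hZbound j] with ω hω
      rwa [Real.norm_eq_abs]
    have hYmeas : ∀ s j, Measurable (Y s j) := fun s j => (hgmeas s).comp (hmeas m j)
    have hYL2 : ∀ s j, MemLp (Y s j) 2 P := by
      intro s j
      refine MemLp.of_bound (hYmeas s j).aestronglyMeasurable 1 ?_
      exact Filter.Eventually.of_forall fun ω => by
        rw [Real.norm_eq_abs]; exact hgbound s (ξ m j ω)
    -- means
    have hEZ : ∀ j, ∫ ω, Z j ω ∂P = μ₁ := by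
      intro j
      rw [hμ₁def, ← hmap j,
        integral_map (hmeas m j).aemeasurable continuous_norm.aestronglyMeasurable]
    have hEY : ∀ s j, ∫ ω, Y s j ω ∂P = 0 := by
      intro s j
      rw [← hgint s, ← hmap j,
        integral_map (hmeas m j).aemeasurable ((hgmeas s).aestronglyMeasurable)]
    -- variances
    have hVarZ : ∀ j, variance (Z j) P ≤ r ^ 2 := by
      intro j
      rw [variance_eq_sub (hZL2 j)]
      have hsq : ∫ ω, (Z j ^ 2) ω ∂P ≤ r ^ 2 := by
        have hb : ∀ᵐ ω ∂P, (Z j ^ 2) ω ≤ r ^ 2 := by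
          filter_upwards [hZbound j] with ω hω
          have := abs_le.1 hω
          simp only [Pi.pow_apply]
          nlinarith [this.1, this.2]
        calc ∫ ω, (Z j ^ 2) ω ∂P ≤ ∫ _ω, r ^ 2 ∂P :=
              integral_mono_ae (by simpa using (hZL2 j).integrable_sq) (integrable_const _) hb
          _ = r ^ 2 := by simp
      nlinarith [sq_nonneg (∫ ω, Z j ω ∂P), hsq]
    have hVarY : ∀ s j, variance (Y s j) P ≤ 1 := by
      intro s j
      rw [variance_eq_sub (hYL2 s j)]
      have hsq : ∫ ω, (Y s j ^ 2) ω ∂P ≤ 1 := by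
        have hb : ∀ᵐ ω ∂P, (Y s j ^ 2) ω ≤ 1 := by
          refine Filter.Eventually.of_forall fun ω => ?_
          have := hgbound s (ξ m j ω)
          have h2 := abs_le.1 this
          simp only [Pi.pow_apply]
          nlinarith [h2.1, h2.2]
        calc ∫ ω, (Y s j ^ 2) ω ∂P ≤ ∫ _ω, (1:ℝ) ∂P :=
              integral_mono_ae (by simpa using (hYL2 s j).integrable_sq) (integrable_const _) hb
          _ = 1 := by simp
      nlinarith [sq_nonneg (∫ ω, Y s j ω ∂P), hsq]
    -- sums
    set NN : Ω → ℝ := ∑ j : Fin m, Z j with hNNdef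
    set WW : (Fin 3 → Bool) → Ω → ℝ := fun s => ∑ j : Fin m, Y s j with hWWdef
    have hNL2 : MemLp NN 2 P := memLp_finset_sum' _ fun j _ => hZL2 j
    have hWL2 : ∀ s, MemLp (WW s) 2 P := fun s => memLp_finset_sum' _ fun j _ => hYL2 s j
    have hNmean : ∫ ω, NN ω ∂P = m * μ₁ := by
      rw [hNNdef]
      have : ∫ ω, (∑ j : Fin m, Z j) ω ∂P = ∑ j : Fin m, ∫ ω, Z j ω ∂P := by
        simp only [Finset.sum_apply]
        exact integral_finset_sum _ fun j _ => (hZL2 j).integrable one_le_two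
      rw [this, Finset.sum_congr rfl fun j _ => hEZ j, Finset.sum_const, card_univ]
      simp [nsmul_eq_mul, Fintype.card_fin]
    have hWmean : ∀ s, ∫ ω, WW s ω ∂P = 0 := by
      intro s
      rw [hWWdef]
      have : ∫ ω, (∑ j : Fin m, Y s j) ω ∂P = ∑ j : Fin m, ∫ ω, Y s j ω ∂P := by
        simp only [Finset.sum_apply]
        exact integral_finset_sum _ fun j _ => (hYL2 s j).integrable one_le_two
      rw [this, Finset.sum_congr rfl fun j _ => hEY s j]
      simp
    have hNvar : variance NN P ≤ m * r ^ 2 := by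
      rw [hNNdef, IndepFun.variance_sum (fun j _ => hZL2 j) ?_]
      · calc ∑ j : Fin m, variance (Z j) P ≤ ∑ _j : Fin m, r ^ 2 :=
              Finset.sum_le_sum fun j _ => hVarZ j
          _ = m * r ^ 2 := by simp [Finset.sum_const, card_univ, nsmul_eq_mul]
      · intro i _ j _ hij
        exact ((hindep m).indepFun hij).comp measurable_norm measurable_norm
    have hWvar : ∀ s, variance (WW s) P ≤ m := by
      intro s
      rw [hWWdef, IndepFun.variance_sum (fun j _ => hYL2 s j) ?_]
      · calc ∑ j : Fin m, variance (Y s j) P ≤ ∑ _j : Fin m, (1:ℝ) :=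
              Finset.sum_le_sum fun j _ => hVarY s j
          _ = m := by simp
      · intro i _ j _ hij
        exact ((hindep m).indepFun hij).comp (hgmeas s) (hgmeas s)
    -- Chebyshev
    have hchebN : P {ω | r * m / 10000 ≤ |NN ω - ∫ x, NN x ∂P|}
        ≤ ENNReal.ofReal (100000000 / m) := by
      have hc : (0:ℝ) < r * m / 10000 := by positivity
      refine (meas_ge_le_variance_div_sq hNL2 hc).trans (ENNReal.ofReal_le_ofReal ?_)
      rw [div_le_div_iff₀ (by positivity) hmpos]
      calc variance NN P * m ≤ (m * r ^ 2) * m := by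
            apply mul_le_mul_of_nonneg_right hNvar hmpos.le
        _ ≤ 100000000 * (r * m / 10000) ^ 2 := le_of_eq (by ring)
    have hchebW : ∀ s, P {ω | (m : ℝ) / 10000 ≤ |WW s ω - ∫ x, WW s x ∂P|}
        ≤ ENNReal.ofReal (100000000 / m) := by
      intro s
      have hc : (0:ℝ) < (m : ℝ) / 10000 := by positivity
      refine (meas_ge_le_variance_div_sq (hWL2 s) hc).trans (ENNReal.ofReal_le_ofReal ?_)
      rw [div_le_div_iff₀ (by positivity) hmpos]
      calc variance (WW s) P * m ≤ (m : ℝ) * m := by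
            apply mul_le_mul_of_nonneg_right (hWvar s) hmpos.le
        _ ≤ 100000000 * ((m : ℝ) / 10000) ^ 2 := le_of_eq (by ring)
    -- bad sets
    set BadN : Set Ω := {ω | r * m / 10000 ≤ |NN ω - ∫ x, NN x ∂P|} with hBadNdef
    set BadW : (Fin 3 → Bool) → Set Ω :=
      fun s => {ω | (m : ℝ) / 10000 ≤ |WW s ω - ∫ x, WW s x ∂P|} with hBadWdef
    set BadB : Set Ω :=
      ⋃ j : Fin m, (ξ m j) ⁻¹' (closedBall (0 : EuclideanSpace ℝ (Fin 3)) r)ᶜ with hBadBdef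
    set Bad : Set Ω := BadN ∪ (⋃ s : Fin 3 → Bool, BadW s) ∪ BadB with hBaddef
    have hNNmeas : Measurable NN := by
      have heq : NN = fun ω => ∑ j : Fin m, Z j ω := by
        funext ω; rw [hNNdef]; simp [Finset.sum_apply]
      rw [heq]
      exact Finset.measurable_sum _ fun j _ => hZmeas j
    have hWWmeas : ∀ s, Measurable (WW s) := by
      intro s
      have heq : WW s = fun ω => ∑ j : Fin m, Y s j ω := by
        funext ω; rw [hWWdef]; simp [Finset.sum_apply]
      rw [heq]
      exact Finset.measurable_sum _ fun j _ => hYmeas s j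
    have hBadmeas : MeasurableSet Bad := by
      refine MeasurableSet.union (MeasurableSet.union ?_ ?_) ?_
      · exact measurableSet_le measurable_const ((hNNmeas.sub measurable_const).abs)
      · exact MeasurableSet.iUnion fun s =>
          measurableSet_le measurable_const (((hWWmeas s).sub measurable_const).abs)
      · exact MeasurableSet.iUnion fun j => (hmeas m j) measurableSet_closedBall.compl
    have hPBadB : P BadB = 0 := by
      rw [hBadBdef]
      refine measure_iUnion_null fun j => ?_
      rw [← Measure.map_apply (hmeas m j) measurableSet_closedBall.compl, hmap j]
      rw [sgNu, Measure.smul_apply, Measure.restrict_apply measurableSet_closedBall.compl,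
        Set.compl_inter_self]
      simp
    have hPBad : P Bad ≤ ENNReal.ofReal (900000000 / m) := by
      calc P Bad ≤ P (BadN ∪ (⋃ s : Fin 3 → Bool, BadW s)) + P BadB := measure_union_le _ _
        _ ≤ P BadN + P (⋃ s : Fin 3 → Bool, BadW s) + 0 := by
            rw [hPBadB]; exact add_le_add (measure_union_le _ _) le_rfl
        _ ≤ ENNReal.ofReal (100000000 / m)
              + (∑ s : Fin 3 → Bool, ENNReal.ofReal (100000000 / m)) + 0 := by
            refine add_le_add (add_le_add hchebN ?_) le_rfl
            exact (measure_iUnion_fintype_le P _).trans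
              (Finset.sum_le_sum fun s _ => hchebW s)
        _ ≤ ENNReal.ofReal (900000000 / m) := by
            rw [Finset.sum_const, card_univ]
            have hcard : Fintype.card (Fin 3 → Bool) = 8 := by
              simp [Fintype.card_fun]
            rw [hcard, add_zero, nsmul_eq_mul, ← ENNReal.ofReal_natCast 8,
              ← ENNReal.ofReal_mul (by positivity), ← ENNReal.ofReal_add (by positivity)
                (by positivity)]
            apply ENNReal.ofReal_le_ofReal
            exact le_of_eq (by push_cast; ring)
    -- the good event implies the claimed inequality on V
    have hsub : Badᶜ ⊆ {ω | 36 / 35 * (m : ℝ)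
        + 2 * Real.sqrt 87 / 35 * t * Real.sqrt m < V m ω / r} := by
      intro ω hω
      simp only [hBaddef, Set.compl_union, Set.mem_inter_iff, Set.mem_compl_iff] at hω
      obtain ⟨⟨hωN, hωW⟩, hωB⟩ := hω
      have hballs : ∀ j : Fin m, ‖ξ m j ω‖ ≤ r := by
        intro j
        have : ω ∉ (ξ m j) ⁻¹' (closedBall (0 : EuclideanSpace ℝ (Fin 3)) r)ᶜ := by
          intro hmem
          exact hωB (Set.mem_iUnion.2 ⟨j, hmem⟩)
        simp only [Set.mem_preimage, Set.mem_compl_iff, not_not] at this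
        exact mem_closedBall_zero_iff.1 this
      -- bound on the norms sum
      have hNlow : m * μ₁ - r * m / 10000 ≤ NN ω := by
        have : ¬ (r * m / 10000 ≤ |NN ω - ∫ x, NN x ∂P|) := hωN
        rw [not_le, hNmean] at this
        have h2 := abs_lt.1 this
        linarith [h2.1]
      -- bound on the discrepancies
      have hWlow : ∀ s : Fin 3 → Bool, |WW s ω| ≤ (m : ℝ) / 10000 := by
        intro s
        have hs : ω ∉ BadW s := fun hmem => hωW (Set.mem_iUnion.2 ⟨s, hmem⟩)
        simp only [hBadWdef, Set.mem_setOf_eq, not_le, hWmean s, sub_zero] at hs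
        exact hs.le
      -- counting identity
      have hcount : ∀ s : Fin 3 → Bool,
          ((Finset.univ.filter fun j : Fin m => sgCell (ξ m j ω) = s).card : ℝ)
            = ∑ j : Fin m,
              ({x : EuclideanSpace ℝ (Fin 3) | sgCell x = s}.indicator
                (fun _ => (1 : ℝ)) (ξ m j ω)) := by
        intro s
        rw [Finset.card_filter]
        push_cast
        refine Finset.sum_congr rfl fun j _ => ?_
        by_cases h : sgCell (ξ m j ω) = s
        · simp [Set.indicator_apply, h]
        · simp [Set.indicator_apply, h]
      have hdiff : ∀ s : Fin 3 → Bool,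
          ((Finset.univ.filter fun j : Fin m => sgCell (ξ m j ω) = s).card : ℝ)
            - ((Finset.univ.filter fun j : Fin m => sgCell (ξ m j ω) = sgNeg s).card : ℝ)
          = WW s ω := by
        intro s
        rw [hcount s, hcount (sgNeg s), hWWdef]
        simp only [Finset.sum_apply]
        rw [← Finset.sum_sub_distrib]
      have hdisc : (∑ s : Fin 3 → Bool,
          |((Finset.univ.filter fun j : Fin m => sgCell (ξ m j ω) = s).card : ℝ)
            - ((Finset.univ.filter fun j : Fin m => sgCell (ξ m j ω) = sgNeg s).card : ℝ)|)
          ≤ 8 * ((m : ℝ) / 10000) := by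
        calc (∑ s : Fin 3 → Bool,
            |((Finset.univ.filter fun j : Fin m => sgCell (ξ m j ω) = s).card : ℝ)
              - ((Finset.univ.filter fun j : Fin m => sgCell (ξ m j ω) = sgNeg s).card : ℝ)|)
            = ∑ s : Fin 3 → Bool, |WW s ω| := by
              refine Finset.sum_congr rfl fun s _ => ?_
              rw [hdiff s]
          _ ≤ ∑ _s : Fin 3 → Bool, (m : ℝ) / 10000 :=
              Finset.sum_le_sum fun s _ => hWlow s
          _ = 8 * ((m : ℝ) / 10000) := by
              rw [Finset.sum_const, card_univ]
              have hcard : Fintype.card (Fin 3 → Bool) = 8 := by simp [Fintype.card_fun]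
              rw [hcard, nsmul_eq_mul]
              push_cast
              ring
      -- apply the deterministic lemma
      have hdet := sg_det_lower m (fun j => ξ m j ω) r hr.le hballs
      have hNsum : (∑ j : Fin m, ‖ξ m j ω‖) = NN ω := by
        rw [hNNdef]; simp only [Finset.sum_apply]
        rfl
      have hVlow : Real.sqrt 2 * ((NN ω) - r * (8 * ((m : ℝ) / 10000))) ≤ V m ω := by
        rw [hV m ω]
        refine le_trans ?_ hdet
        apply mul_le_mul_of_nonneg_left ?_ (Real.sqrt_nonneg 2)
        rw [hNsum]
        have := hdisc
        nlinarith [hdisc, hr.le]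
      -- numeric estimates
      have hs2 : (1.4142 : ℝ) ≤ Real.sqrt 2 := by
        nlinarith [Real.sq_sqrt (show (0:ℝ) ≤ 2 by norm_num), Real.sqrt_nonneg 2]
      have hVlow2 : (36 / 35 + 1 / 100) * (m * r) ≤ V m ω := by
        refine le_trans ?_ hVlow
        have hNlow2 : m * (4719 / 6400 * r) - r * m / 10000 ≤ NN ω := by
          refine le_trans ?_ hNlow
          have : (m : ℝ) * (4719 / 6400 * r) ≤ m * μ₁ :=
            mul_le_mul_of_nonneg_left hμ₁ (by positivity)
          linarith
        have harith : (36 / 35 + 1 / 100) * (m * r)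
            ≤ Real.sqrt 2 * (m * (4719 / 6400 * r) - r * m / 10000 - r * (8 * ((m : ℝ) / 10000))) := by
          have hrm : (0:ℝ) ≤ (m : ℝ) * r := by positivity
          have hconst : (36 / 35 + 1 / 100 : ℝ) ≤ Real.sqrt 2 * (4719 / 6400 - 9 / 10000) := by
            nlinarith [hs2]
          nlinarith [mul_le_mul_of_nonneg_right hconst hrm]
        refine harith.trans ?_
        apply mul_le_mul_of_nonneg_left ?_ (Real.sqrt_nonneg 2)
        linarith
      -- from m ≥ M : the √m term is dominated
      have hMle : (200 * (|t| + 1)) ^ 2 ≤ (m : ℝ) := by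
        have h1 : ⌈(200 * (|t| + 1)) ^ 2⌉₊ ≤ m := le_trans (le_max_right _ _) hm
        calc (200 * (|t| + 1)) ^ 2 ≤ (⌈(200 * (|t| + 1)) ^ 2⌉₊ : ℝ) := Nat.le_ceil _
          _ ≤ (m : ℝ) := by exact_mod_cast h1
      have hsqm : 200 * (|t| + 1) ≤ Real.sqrt m := by
        rw [Real.le_sqrt (by positivity) (by positivity)]
        exact hMle
      have hsqrtm_pos : 0 < Real.sqrt m := lt_of_lt_of_le (by positivity) hsqm
      have hsqm_sq : Real.sqrt m * Real.sqrt m = m := Real.mul_self_sqrt (by positivity)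
      have h87 : Real.sqrt 87 ≤ 10 := by
        rw [show (10:ℝ) = Real.sqrt 100 by
          rw [show (100:ℝ) = 10 ^ 2 by norm_num, Real.sqrt_sq (by norm_num : (0:ℝ) ≤ 10)]]
        exact Real.sqrt_le_sqrt (by norm_num)
      have hdom : 2 * Real.sqrt 87 / 35 * t * Real.sqrt m < 1 / 100 * m := by
        have h1 : 2 * Real.sqrt 87 / 35 * t * Real.sqrt m ≤ |t| * Real.sqrt m := by
          have hc1 : 2 * Real.sqrt 87 / 35 ≤ 1 := by
            nlinarith [h87, Real.sqrt_nonneg 87]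
          have hc0 : 0 ≤ 2 * Real.sqrt 87 / 35 := by positivity
          calc 2 * Real.sqrt 87 / 35 * t * Real.sqrt m
              ≤ 2 * Real.sqrt 87 / 35 * |t| * Real.sqrt m := by
                apply mul_le_mul_of_nonneg_right ?_ hsqrtm_pos.le
                exact mul_le_mul_of_nonneg_left (le_abs_self t) hc0
            _ ≤ 1 * |t| * Real.sqrt m := by
                apply mul_le_mul_of_nonneg_right ?_ hsqrtm_pos.le
                exact mul_le_mul_of_nonneg_right hc1 (abs_nonneg t)
            _ = |t| * Real.sqrt m := by ring
        have h2 : |t| * Real.sqrt m < 1 / 100 * m := by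
          nlinarith [hsqm, hsqm_sq, hsqrtm_pos, abs_nonneg t]
        linarith
      -- conclude
      have hVdiv : (36 / 35 + 1 / 100) * (m : ℝ) ≤ V m ω / r := by
        rw [le_div_iff₀ hr]
        calc (36 / 35 + 1 / 100) * (m : ℝ) * r = (36 / 35 + 1 / 100) * (m * r) := by ring
          _ ≤ V m ω := hVlow2
      show 36 / 35 * (m : ℝ) + 2 * Real.sqrt 87 / 35 * t * Real.sqrt m < V m ω / r
      calc 36 / 35 * (m : ℝ) + 2 * Real.sqrt 87 / 35 * t * Real.sqrt m
          < 36 / 35 * (m : ℝ) + 1 / 100 * m := by linarith [hdom]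
        _ = (36 / 35 + 1 / 100) * (m : ℝ) := by ring
        _ ≤ V m ω / r := hVdiv
    -- probability accounting
    have hPev : (1 : ℝ) - 900000000 / m ≤ f m := by
      have h1 : P Badᶜ ≤ P {ω | 36 / 35 * (m : ℝ)
          + 2 * Real.sqrt 87 / 35 * t * Real.sqrt m < V m ω / r} := measure_mono hsub
      have h2 : (P Badᶜ).toReal = 1 - (P Bad).toReal := by
        rw [prob_compl_eq_one_sub hBadmeas,
          ENNReal.toReal_sub_of_le prob_le_one ENNReal.one_ne_top, ENNReal.toReal_one]
      have h3 : (P Bad).toReal ≤ 900000000 / m :=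
        ENNReal.toReal_le_of_le_ofReal (by positivity) hPBad
      have h4 : (P Badᶜ).toReal ≤ f m := by
        rw [hfdef]
        exact ENNReal.toReal_mono (measure_ne_top _ _) h1
      rw [h2] at h4
      linarith
    exact hPev
  -- pass to the liminf
  have hev : ∀ᶠ m in atTop, (1 : ℝ) - 900000000 / m
      ≤ f m := eventually_atTop.2 ⟨M, key⟩
  have hg : Tendsto (fun m : ℕ => (1 : ℝ) - 900000000 / m) atTop (nhds 1) := by
    have h0 : Tendsto (fun m : ℕ => (900000000 : ℝ) / m) atTop (nhds 0) :=
      tendsto_const_div_atTop_nhds_zero_nat 900000000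
    have h1 := h0.const_sub (1 : ℝ)
    simpa using h1
  have hfle : ∀ m, f m ≤ 1 := by
    intro m
    rw [hfdef]
    calc (P _).toReal ≤ (1 : ℝ≥0∞).toReal := ENNReal.toReal_mono ENNReal.one_ne_top prob_le_one
      _ = 1 := ENNReal.toReal_one
  have hliminf : (1 : ℝ) ≤ liminf f atTop := by
    have hgliminf : liminf (fun m : ℕ => (1 : ℝ) - 900000000 / m) atTop = 1 :=
      hg.liminf_eq
    rw [← hgliminf]
    refine liminf_le_liminf hev ?_ ?_
    · exact hg.isBoundedUnder_ge
    · exact Filter.IsBoundedUnder.isCoboundedUnder_ge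
        ⟨1, Filter.eventually_map.2 (Filter.Eventually.of_forall fun m => hfle m)⟩
  linarith [hliminf, hΦ0]
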